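/- arXiv:2204.07720 — 2 statements merged into one kernel-verified Lean document; each statement's English description precedes it below -/
import Mathlib

section
/- Let G be a finite simple graph with m > 0 edges, and let S and S* be disjoint finite sets of vertices of G with S nonempty, S* nonempty, and CM(S) > 0. If DM(S ∪ S*) ≥ DM(S), then CM(S ∪ S*) ≥ CM(S). (Whenever density modularity suffers from the resolution limit problem — i.e., merging the disjoint community S* into S does not decrease the density modularity — the classic modularity suffers from the resolution limit problem as well.) -/
/-!
`CM` and `DM` divide the same numerator `q C = 2 l_C - d_C² / (2m)` by `2m` and by `2|C|`.
`CM S > 0` makes `q S` positive; then `q S / |S| ≤ q (S ∪ S*) / |S ∪ S*|` together with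
`|S| ≤ |S ∪ S*|` forces `q S ≤ q (S ∪ S*)`, which is `CM S ≤ CM (S ∪ S*)`.
-/

open Finset

/-- Number of edges of `G` with both endpoints in `C`. -/
noncomputable def numEdgesIn {V : Type*} [Fintype V] [DecidableEq V]
    (G : SimpleGraph V) [DecidableRel G.Adj] (C : Finset V) : ℕ :=
  (G.edgeFinset.filter fun e => ∀ v ∈ e, v ∈ C).card

/-- Sum over `C` of the degrees taken in `G`. -/
def degSum {V : Type*} [Fintype V] [DecidableEq V]
    (G : SimpleGraph V) [DecidableRel G.Adj] (C : Finset V) : ℕ :=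
  ∑ v ∈ C, G.degree v

/-- Classic modularity. -/
noncomputable def CM {V : Type*} [Fintype V] [DecidableEq V]
    (G : SimpleGraph V) [DecidableRel G.Adj] (C : Finset V) : ℝ :=
  (1 / (2 * (G.edgeFinset.card : ℝ))) *
    (2 * (numEdgesIn G C : ℝ) -
      (degSum G C : ℝ) ^ 2 / (2 * (G.edgeFinset.card : ℝ)))

/-- Density modularity. -/
noncomputable def DM {V : Type*} [Fintype V] [DecidableEq V]
    (G : SimpleGraph V) [DecidableRel G.Adj] (C : Finset V) : ℝ :=
  (1 / (2 * (C.card : ℝ))) *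
    (2 * (numEdgesIn G C : ℝ) -
      (degSum G C : ℝ) ^ 2 / (2 * (G.edgeFinset.card : ℝ)))

theorem le_of_div_le_div_of_le {a b s t : ℝ} (ha : 0 < a) (hs : 0 < s) (hst : s ≤ t)
    (h : a / s ≤ b / t) : a ≤ b := by
  have ht : 0 < t := hs.trans_le hst
  calc a = a / s * s := (div_mul_cancel₀ a hs.ne').symm
    _ ≤ a / s * t := by gcongr
    _ ≤ b / t * t := by gcongr
    _ = b := div_mul_cancel₀ b ht.ne'

section Modularity

variable {V : Type*} [Fintype V] [DecidableEq V] (G : SimpleGraph V) [DecidableRel G.Adj]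

noncomputable def modularityNumerator (C : Finset V) : ℝ :=
  2 * (numEdgesIn G C : ℝ) - (degSum G C : ℝ) ^ 2 / (2 * (G.edgeFinset.card : ℝ))

theorem CM_eq_div (C : Finset V) :
    CM G C = modularityNumerator G C / (2 * (G.edgeFinset.card : ℝ)) := by
  rw [CM, modularityNumerator, one_div_mul_eq_div]

theorem DM_eq_div (C : Finset V) :
    DM G C = modularityNumerator G C / (2 * (C.card : ℝ)) := by
  rw [DM, modularityNumerator, one_div_mul_eq_div]

variable {G}

theorem modularityNumerator_pos_of_CM_pos {C : Finset V} (h : 0 < CM G C) :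
    0 < modularityNumerator G C := by
  rw [CM_eq_div] at h
  obtain ⟨hpos, -⟩ | ⟨-, hneg⟩ := div_pos_iff.mp h
  · exact hpos
  · exact (not_lt.mpr (by positivity) hneg).elim

theorem CM_le_CM_of_modularityNumerator_le {C D : Finset V}
    (h : modularityNumerator G C ≤ modularityNumerator G D) : CM G C ≤ CM G D := by
  rw [CM_eq_div, CM_eq_div]
  gcongr

theorem modularityNumerator_le_of_DM_le {S T : Finset V} (hS : S.Nonempty) (hST : S ⊆ T)
    (hpos : 0 < modularityNumerator G S) (h : DM G S ≤ DM G T) :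
    modularityNumerator G S ≤ modularityNumerator G T := by
  rw [DM_eq_div, DM_eq_div] at h
  refine le_of_div_le_div_of_le hpos (by positivity) ?_ h
  gcongr

end Modularity

theorem dm_resolution_limit_implies_cm_resolution_limit_general
    {V : Type*} [Fintype V] [DecidableEq V]
    (G : SimpleGraph V) [DecidableRel G.Adj]
    (S Sstar : Finset V)
    (hS : S.Nonempty)
    (hCM : 0 < CM G S)
    (h : DM G S ≤ DM G (S ∪ Sstar)) :
    CM G S ≤ CM G (S ∪ Sstar) :=
  CM_le_CM_of_modularityNumerator_le <|
    modularityNumerator_le_of_DM_le hS subset_union_left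
      (modularityNumerator_pos_of_CM_pos hCM) h

/-- Whenever density modularity suffers from the resolution limit problem
(for a disjoint merge), the classic modularity suffers from it as well. -/
theorem dm_resolution_limit_implies_cm_resolution_limit
    {V : Type*} [Fintype V] [DecidableEq V]
    (G : SimpleGraph V) [DecidableRel G.Adj]
    (S Sstar : Finset V)
    (hm : 0 < G.edgeFinset.card)
    (hdisj : Disjoint S Sstar)
    (hS : S.Nonempty) (hSstar : Sstar.Nonempty)
    (hCM : 0 < CM G S)
    (h : DM G S ≤ DM G (S ∪ Sstar)) :
    CM G S ≤ CM G (S ∪ Sstar) :=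
  dm_resolution_limit_implies_cm_resolution_limit_general G S Sstar hS hCM h
end

section
/- Let G be a finite simple graph with m > 0 edges, and let S and S* be finite sets of vertices of G with CM(S) > 0 and with S* not contained in S (so |S| < |S ∪ S*|). If CM(S) > CM(S ∪ S*), then DM(S) > DM(S ∪ S*); that is, the strict contrapositive of the free-rider comparison holds: whenever the classic modularity strictly decreases upon merging S*, the density modularity strictly decreases as well. -/
/-! `CM` and `DM` share the numerator `q(C) = 2 l_C - d_C² / (2m)` and differ only in the
normalisation, by `2m` and by `2|C|`. Hence `CM(S) > 0` and `CM(S) > CM(S ∪ S*)` say that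
`q(S) > 0` (which forces `S ≠ ∅`) and `q(S ∪ S*) < q(S)`, and then
`q(S ∪ S*) / |S ∪ S*| < q(S) / |S ∪ S*| < q(S) / |S|` since `|S| < |S ∪ S*|`. -/

open Finset

section

variable {V : Type*} [Fintype V] [DecidableEq V] (G : SimpleGraph V) [DecidableRel G.Adj]

theorem CM_eq_mul_modularityNumerator (C : Finset V) :
    CM G C = 1 / (2 * (G.edgeFinset.card : ℝ)) * modularityNumerator G C :=
  rfl

theorem DM_eq_modularityNumerator_div (C : Finset V) :
    DM G C = modularityNumerator G C / (2 * (#C : ℝ)) :=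
  one_div_mul_eq_div _ _

@[simp]
theorem numEdgesIn_empty : numEdgesIn G ∅ = 0 := by
  simp only [numEdgesIn, notMem_empty, card_eq_zero, filter_eq_empty_iff]
  exact fun e _ he => he _ (Sym2.out_fst_mem e)

@[simp]
theorem degSum_empty : degSum G ∅ = 0 :=
  sum_empty

@[simp]
theorem modularityNumerator_empty : modularityNumerator G ∅ = 0 := by
  simp [modularityNumerator]

theorem nonempty_of_modularityNumerator_pos {C : Finset V} (hC : 0 < modularityNumerator G C) :
    C.Nonempty := by
  rw [nonempty_iff_ne_empty]
  rintro rfl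
  simp at hC

end

theorem cm_strict_decrease_implies_dm_strict_decrease_general
    {V : Type*} [Fintype V] [DecidableEq V]
    (G : SimpleGraph V) [DecidableRel G.Adj]
    (S Sstar : Finset V)
    (hCM : 0 < CM G S)
    (hsub : ¬ Sstar ⊆ S)
    (h : CM G (S ∪ Sstar) < CM G S) :
    DM G (S ∪ Sstar) < DM G S := by
  have hfactor : 0 ≤ 1 / (2 * (G.edgeFinset.card : ℝ)) := by positivity
  rw [CM_eq_mul_modularityNumerator] at hCM h
  have hpos : 0 < modularityNumerator G S := pos_of_mul_pos_right hCM hfactor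
  have hlt := lt_of_mul_lt_mul_left h hfactor
  have hS : (0 : ℝ) < #S := mod_cast card_pos.2 (nonempty_of_modularityNumerator_pos G hpos)
  have hgrow : (#S : ℝ) < #(S ∪ Sstar) := mod_cast card_lt_card <|
    subset_union_left.ssubset_of_not_subset fun hle => hsub (subset_union_right.trans hle)
  rw [DM_eq_modularityNumerator_div, DM_eq_modularityNumerator_div]
  calc modularityNumerator G (S ∪ Sstar) / (2 * #(S ∪ Sstar))
      < modularityNumerator G S / (2 * #(S ∪ Sstar)) :=
        div_lt_div_of_pos_right hlt (by linarith)
    _ < modularityNumerator G S / (2 * #S) :=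
        div_lt_div_of_pos_left hpos (by positivity) (by linarith)

/-- Strict contrapositive of the free-rider comparison: whenever the
classic modularity strictly decreases upon merging `S*`, the density modularity
strictly decreases as well. -/
theorem cm_strict_decrease_implies_dm_strict_decrease
    {V : Type*} [Fintype V] [DecidableEq V]
    (G : SimpleGraph V) [DecidableRel G.Adj]
    (S Sstar : Finset V)
    (hm : 0 < G.edgeFinset.card)
    (hCM : 0 < CM G S)
    (hsub : ¬ Sstar ⊆ S)
    (h : CM G (S ∪ Sstar) < CM G S) :
    DM G (S ∪ Sstar) < DM G S :=
  cm_strict_decrease_implies_dm_strict_decrease_general G S Sstar hCM hsub h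
end
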